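/- arXiv:1907.05029 — 2 statements merged into one kernel-verified Lean document; each statement's English description precedes it below -/
import Mathlib

section
/- Equivalence of validity for patterns (Theorem relating ML and HModL): For any matching logic pattern φ of sort s over (S,Σ) (equivalently, any φ ∈ Form⁰_s), φ is valid in matching logic (i.e., (M,ρ) ⊨^{ML}_s φ for every matching logic model M and every M-valuation ρ) if and only if φ is valid in the many-sorted hybrid modal logic (i.e., M,g,w ⊨_s φ for every standard model M, every assignment g, and every world w of sort s). Consequently, by the completeness theorems of the two systems, ⊢_{ML} φ if and only if ⊢_s^{HModL} φ. -/
/-! A hybrid model with its valuation forgotten is a matching logic model, and in it the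
extension of a pattern is exactly the set of worlds satisfying the pattern read as a
`Form⁰`-formula. Every matching logic model arises in this way, from a standard model with
arbitrary valuations, since `Form⁰`-formulas do not see the valuation. -/

set_option maxHeartbeats 1000000

attribute [local instance] Classical.propDecidable

namespace HybridML

/-- A many-sorted signature: sorts, operation symbols with arities and result sorts. -/
structure Sig : Type 1 where
  S : Type
  Op : Type
  n : Op → ℕ
  arg : (σ : Op) → Fin (n σ) → S
  res : Op → S

/-- The non-logical vocabulary: S-sorted propositional variables (each nonempty),
nominals, and state variables (each sort inhabited). -/
structure Lang (Sg : Sig) : Type 1 where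
  PROP : Sg.S → Type
  NOM : Sg.S → Type
  SVAR : Sg.S → Type
  neP : ∀ s, Nonempty (PROP s)
  neS : ∀ s, Nonempty (SVAR s)

/-- State symbols of sort `t`: nominals or state variables. -/
abbrev StSym {Sg : Sig} (L : Lang Sg) (t : Sg.S) := L.NOM t ⊕ L.SVAR t

/-- Formulas of the many-sorted hybrid logic `H_Σ(∀)`. -/
inductive Form (Sg : Sig) (L : Lang Sg) : Sg.S → Type where
  | prop {s} : L.PROP s → Form Sg L s
  | nom {s} : L.NOM s → Form Sg L s
  | svar {s} : L.SVAR s → Form Sg L s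
  | neg {s} : Form Sg L s → Form Sg L s
  | or {s} : Form Sg L s → Form Sg L s → Form Sg L s
  | app (σ : Sg.Op) : (∀ i, Form Sg L (Sg.arg σ i)) → Form Sg L (Sg.res σ)
  | all {s t} : L.SVAR t → Form Sg L s → Form Sg L s

variable {Sg : Sig} {L : Lang Sg}

namespace Form

def imp {s} (φ ψ : Form Sg L s) : Form Sg L s := .or (.neg φ) ψ

def and {s} (φ ψ : Form Sg L s) : Form Sg L s := .neg (.or (.neg φ) (.neg ψ))

def iff {s} (φ ψ : Form Sg L s) : Form Sg L s := and (imp φ ψ) (imp ψ φ)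

noncomputable def top (s : Sg.S) : Form Sg L s :=
  .or (.prop (Classical.choice (L.neP s))) (.neg (.prop (Classical.choice (L.neP s))))

noncomputable def bot (s : Sg.S) : Form Sg L s := .neg (top s)

end Form

/-- The dual modal operator `σ□`. -/
def dapp (σ : Sg.Op) (φs : ∀ i, Form Sg L (Sg.arg σ i)) : Form Sg L (Sg.res σ) :=
  .neg (.app σ fun i => .neg (φs i))

/-- The existential binder `∃x φ := ¬∀x¬φ`. -/
def exi {s t} (x : L.SVAR t) (φ : Form Sg L s) : Form Sg L s := .neg (.all x (.neg φ))

/-- Free state variables of a formula (as a set of sorted variables). -/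
def free : ∀ {s}, Form Sg L s → Set (Σ u, L.SVAR u)
  | _, .prop _ => ∅
  | _, .nom _ => ∅
  | s, .svar y => {⟨s, y⟩}
  | _, .neg φ => free φ
  | _, .or φ ψ => free φ ∪ free ψ
  | _, .app _ φs => ⋃ i, free (φs i)
  | _, .all y φ => free φ \ {⟨_, y⟩}

/-- All state variables occurring (free or bound) in a formula. -/
def occ : ∀ {s}, Form Sg L s → Set (Σ u, L.SVAR u)
  | _, .prop _ => ∅
  | _, .nom _ => ∅
  | s, .svar y => {⟨s, y⟩}
  | _, .neg φ => occ φ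
  | _, .or φ ψ => occ φ ∪ occ ψ
  | _, .app _ φs => ⋃ i, occ (φs i)
  | _, .all y φ => insert ⟨_, y⟩ (occ φ)

/-- Substitution `φ[ζ/x]` of the formula `ζ` (a state symbol, viewed as a formula) for
all free occurrences of the state variable `x`. -/
noncomputable def subst {t : Sg.S} (x : L.SVAR t) (ζ : Form Sg L t) :
    ∀ {s}, Form Sg L s → Form Sg L s
  | _, .prop p => .prop p
  | _, .nom j => .nom j
  | s, .svar y =>
      if h : (⟨s, y⟩ : Σ u, L.SVAR u) = ⟨t, x⟩ then
        cast (congrArg (Form Sg L) (congrArg Sigma.fst h)).symm ζ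
      else .svar y
  | _, .neg φ => .neg (subst x ζ φ)
  | _, .or φ ψ => .or (subst x ζ φ) (subst x ζ ψ)
  | _, .app σ φs => .app σ (fun i => subst x ζ (φs i))
  | s, .all y φ =>
      if (⟨_, y⟩ : Σ u, L.SVAR u) = ⟨t, x⟩ then .all y φ else .all y (subst x ζ φ)

/-- `SubstitutableV x y φ`: the state variable `y` is substitutable for `x` in `φ`:
no free occurrence of `x` in `φ` lies in the scope of a binder `∀y`. -/
def SubstitutableV {t u : Sg.S} (x : L.SVAR t) (y : L.SVAR u) : ∀ {s}, Form Sg L s → Prop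
  | _, .prop _ => True
  | _, .nom _ => True
  | _, .svar _ => True
  | _, .neg φ => SubstitutableV x y φ
  | _, .or φ ψ => SubstitutableV x y φ ∧ SubstitutableV x y ψ
  | _, .app _ φs => ∀ i, SubstitutableV x y (φs i)
  | _, .all z φ =>
      (⟨t, x⟩ : Σ v, L.SVAR v) ∉ free (Form.all z φ) ∨
      ((⟨_, z⟩ : Σ v, L.SVAR v) ≠ ⟨u, y⟩ ∧ SubstitutableV x y φ)

/-- An `(S,Σ)`-model: a frame together with a valuation. -/
structure Model (Sg : Sig) (L : Lang Sg) : Type 1 where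
  W : Sg.S → Type
  ne : ∀ s, Nonempty (W s)
  R : ∀ σ : Sg.Op, W (Sg.res σ) → (∀ i, W (Sg.arg σ i)) → Prop
  Vp : ∀ s, L.PROP s → Set (W s)
  Vn : ∀ s, L.NOM s → Set (W s)

/-- A model is standard if every nominal is evaluated to a singleton. -/
def Model.Standard (M : Model Sg L) : Prop := ∀ s (j : L.NOM s), ∃ w, M.Vn s j = {w}

/-- An assignment of the state variables. -/
def Assign (M : Model Sg L) := ∀ s, L.SVAR s → M.W s

/-- `Variant g g' x`: the assignments `g` and `g'` agree except possibly at `x`. -/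
def Variant {M : Model Sg L} (g g' : Assign M) {t} (x : L.SVAR t) : Prop :=
  ∀ (u) (y : L.SVAR u), (⟨u, y⟩ : Σ v, L.SVAR v) ≠ ⟨t, x⟩ → g u y = g' u y

/-- The satisfaction relation `M,g,w ⊨_s φ` of `H_Σ(∀)`. -/
def Sat (M : Model Sg L) : ∀ {s}, Assign M → Form Sg L s → M.W s → Prop
  | s, _, .prop p, w => w ∈ M.Vp s p
  | s, _, .nom j, w => w ∈ M.Vn s j
  | s, g, .svar x, w => w = g s x
  | _, g, .neg φ, w => ¬ Sat M g φ w
  | _, g, .or φ ψ, w => Sat M g φ w ∨ Sat M g ψ w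
  | _, g, .app σ φs, w => ∃ ws, M.R σ w ws ∧ ∀ i, Sat M g (φs i) (ws i)
  | _, g, .all x φ, w => ∀ g', Variant g g' x → Sat M g' φ w

/-- Propositional skeletons, used to express "all instances of propositional tautologies". -/
inductive PForm where
  | atom : ℕ → PForm
  | neg : PForm → PForm
  | or : PForm → PForm → PForm

def PForm.eval (v : ℕ → Bool) : PForm → Bool
  | .atom n => v n
  | .neg p => !(p.eval v)
  | .or p q => p.eval v || q.eval v

/-- A propositional tautology. -/
def PForm.Taut (p : PForm) : Prop := ∀ v, p.eval v = true

/-- Instantiation of a propositional skeleton by formulas of sort `s`. -/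
def PForm.inst {s} (f : ℕ → Form Sg L s) : PForm → Form Sg L s
  | .atom n => f n
  | .neg p => .neg (p.inst f)
  | .or p q => .or (p.inst f) (q.inst f)

/-- Hole-free "nominal context" parts: built from `⊤` and the operation symbols. -/
inductive Ctx0 (Sg : Sig) : Sg.S → Type where
  | top {s} : Ctx0 Sg s
  | app (σ : Sg.Op) : (∀ i, Ctx0 Sg (Sg.arg σ i)) → Ctx0 Sg (Sg.res σ)

/-- Nominal contexts with exactly one hole of sort `h`. -/
inductive Ctx1 (Sg : Sig) (h : Sg.S) : Sg.S → Type where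
  | hole : Ctx1 Sg h h
  | app (σ : Sg.Op) (i : Fin (Sg.n σ)) :
      Ctx1 Sg h (Sg.arg σ i) → (∀ j, Ctx0 Sg (Sg.arg σ j)) → Ctx1 Sg h (Sg.res σ)

noncomputable def Ctx0.toForm : ∀ {s}, Ctx0 Sg s → Form Sg L s
  | s, .top => Form.top s
  | _, .app σ cs => .app σ (fun i => (cs i).toForm)

/-- Plugging a formula into the (unique) hole of a nominal context. -/
noncomputable def Ctx1.plug {h} (φ : Form Sg L h) : ∀ {s}, Ctx1 Sg h s → Form Sg L s
  | _, .hole => φ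
  | _, .app σ i c args =>
      .app σ (Function.update (fun j => Ctx0.toForm (args j)) i (c.plug φ))

/-- The dual `η□` of a nominal context, as an operation on formulas. -/
noncomputable def plugD {h s} (θ : Ctx1 Sg h s) (φ : Form Sg L h) : Form Sg L s :=
  .neg (θ.plug (.neg φ))

/-- The deductive system of `H_Σ(∀)`. -/
inductive Prf : ∀ {s : Sg.S}, Form Sg L s → Prop where
  | taut {s} (p : PForm) (f : ℕ → Form Sg L s) : p.Taut → Prf (p.inst f)
  | kax (σ : Sg.Op) (i : Fin (Sg.n σ)) (φs : ∀ j, Form Sg L (Sg.arg σ j))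
      (φ χ : Form Sg L (Sg.arg σ i)) :
      Prf (Form.imp (dapp σ (Function.update φs i (Form.imp φ χ)))
        (Form.imp (dapp σ (Function.update φs i φ)) (dapp σ (Function.update φs i χ))))
  | dualax (σ : Sg.Op) (φs : ∀ j, Form Sg L (Sg.arg σ j)) :
      Prf (Form.iff (.app σ φs) (.neg (dapp σ fun j => .neg (φs j))))
  | q1 {s t} (x : L.SVAR t) (φ ψ : Form Sg L s)
      (hx : (⟨t, x⟩ : Σ v, L.SVAR v) ∉ free φ) :
      Prf (Form.imp (.all x (Form.imp φ ψ)) (Form.imp φ (.all x ψ)))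
  | q2v {s t} (x y : L.SVAR t) (φ : Form Sg L s) (h : SubstitutableV x y φ) :
      Prf (Form.imp (.all x φ) (subst x (.svar y) φ))
  | q2n {s t} (x : L.SVAR t) (j : L.NOM t) (φ : Form Sg L s) :
      Prf (Form.imp (.all x φ) (subst x (.nom j) φ))
  | nameax {s} (x : L.SVAR s) : Prf (exi x (Form.svar x))
  | barcan (σ : Sg.Op) (i : Fin (Sg.n σ)) {t} (x : L.SVAR t)
      (φs : ∀ j, Form Sg L (Sg.arg σ j)) :
      Prf (Form.imp (.all x (dapp σ φs)) (dapp σ (Function.update φs i (.all x (φs i)))))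
  | nomax {s s'} (η θ : Ctx1 Sg s' s) (x : L.SVAR s') (φ : Form Sg L s') :
      Prf (.all x (Form.imp (η.plug (Form.and (.svar x) φ)) (plugD θ (Form.imp (.svar x) φ))))
  | mp {s} {φ ψ : Form Sg L s} : Prf (Form.imp φ ψ) → Prf φ → Prf ψ
  | ug (σ : Sg.Op) (i : Fin (Sg.n σ)) (φs : ∀ j, Form Sg L (Sg.arg σ j))
      {φ : Form Sg L (Sg.arg σ i)} : Prf φ → Prf (dapp σ (Function.update φs i φ))
  | gen {s t} (x : L.SVAR t) {φ : Form Sg L s} : Prf φ → Prf (.all x φ)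

/-- Conjunction of a finite list of formulas. -/
noncomputable def conj {s} : List (Form Sg L s) → Form Sg L s
  | [] => Form.top s
  | φ :: l => Form.and φ (conj l)

/-- A set of sort-`s` formulas is consistent if `⊥_s` is not derivable from it. -/
def Consistent {s} (Γ : Set (Form Sg L s)) : Prop :=
  ¬ ∃ l : List (Form Sg L s), (∀ φ ∈ l, φ ∈ Γ) ∧ Prf (Form.imp (conj l) (Form.bot s))

/-- Maximal consistent sets. -/
def MaxConsistent {s} (Γ : Set (Form Sg L s)) : Prop :=
  Consistent Γ ∧ ∀ Δ, Consistent Δ → Γ ⊆ Δ → Δ = Γ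

/-- A maximal consistent set of sort `s` is witnessed if every existential formula
has a nominal witness conditional in the set. -/
def Witnessed {s} (Γ : Set (Form Sg L s)) : Prop :=
  ∀ {t} (x : L.SVAR t) (φ : Form Sg L s),
    ∃ j : L.NOM t, Form.imp (exi x φ) (subst x (.nom j) φ) ∈ Γ

/-- The canonical relation between (maximal consistent) sets of formulas:
`R_σ w u₁…u_n` iff `σ(ψ₁,…,ψ_n) ∈ w` whenever `ψ_i ∈ u_i` for all `i`. -/
def CanR (σ : Sg.Op) (w : Set (Form Sg L (Sg.res σ)))
    (us : ∀ i, Set (Form Sg L (Sg.arg σ i))) : Prop :=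
  ∀ ψs : ∀ i, Form Sg L (Sg.arg σ i), (∀ i, ψs i ∈ us i) → Form.app σ ψs ∈ w

/-- Reachability from `Υ` in the witnessed canonical model (the generated submodel). -/
inductive Reach {s} (Υ : Set (Form Sg L s)) : ∀ t, Set (Form Sg L t) → Prop where
  | base : Reach Υ s Υ
  | step {σ : Sg.Op} {w : Set (Form Sg L (Sg.res σ))} {us : ∀ i, Set (Form Sg L (Sg.arg σ i))}
      (i : Fin (Sg.n σ)) : Reach Υ (Sg.res σ) w →
      (∀ j, MaxConsistent (us j) ∧ Witnessed (us j)) → CanR σ w us →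
      Reach Υ (Sg.arg σ i) (us i)
/-- Witnessed maximal consistent sets. -/
def WMCS {s} (Γ : Set (Form Sg L s)) : Prop := MaxConsistent Γ ∧ Witnessed Γ

section Completed

variable {s : Sg.S} (Υ : Set (Form Sg L s))

/-- Worlds of the witnessed submodel generated by `Υ`:
witnessed maximal consistent sets reachable from `Υ`. -/
def RW (t : Sg.S) : Type := {Γ : Set (Form Sg L t) // WMCS Γ ∧ Reach Υ t Γ}

/-- The sort `t` needs a dummy state `⋆_t` iff some state variable of sort `t`
occurs in no world of sort `t`. -/
def needsStar (t : Sg.S) : Prop := ∃ x : L.SVAR t, ∀ Γ : RW Υ t, Form.svar x ∉ Γ.val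

/-- Worlds of the completed model: the generated witnessed worlds, plus the dummy
state `⋆_t` (represented by `none`), which is present only when needed. -/
def CW (t : Sg.S) : Type := {o : Option (RW Υ t) // o = none → needsStar Υ t}

variable (hΥ : WMCS Υ)

/-- `Υ` as a world of the generated submodel. -/
def baseW : RW Υ s := ⟨Υ, hΥ, Reach.base⟩

/-- The completed witnessed model generated by `Υ`. -/
noncomputable def completedModel : Model Sg L where
  W := CW Υ
  ne := fun t => by
    by_cases h : Nonempty (RW Υ t)
    · exact ⟨⟨some h.some, fun hc => (Option.some_ne_none _ hc).elim⟩⟩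
    · exact ⟨⟨none, fun _ => ⟨Classical.choice (L.neS t), fun Γ _ => h ⟨Γ⟩⟩⟩⟩
  R := fun σ w ws =>
    (∃ (Γ : RW Υ (Sg.res σ)) (us : ∀ i, RW Υ (Sg.arg σ i)),
        w.val = some Γ ∧ (∀ i, (ws i).val = some (us i)) ∧
        CanR σ Γ.val (fun i => (us i).val))
    ∨ (w.val = none ∧ ∀ i, ∃ h : Sg.arg σ i = s,
        (ws i).val = some (cast (congrArg (RW Υ) h).symm (baseW Υ hΥ)))
  Vp := fun t p => {w | ∃ Γ : RW Υ t, w.val = some Γ ∧ Form.prop p ∈ Γ.val}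
  Vn := fun t j =>
    if ∃ Γ : RW Υ t, Form.nom j ∈ Γ.val then
      {w | ∃ Γ : RW Υ t, w.val = some Γ ∧ Form.nom j ∈ Γ.val}
    else {w | w.val = none}

/-- The completed assignment: each state variable denotes the world containing it,
if any, and the dummy state otherwise. -/
noncomputable def completedAssign : Assign (completedModel Υ hΥ) := fun t x =>
  if h : ∃ Γ : RW Υ t, Form.svar x ∈ Γ.val then
    ⟨some h.choose, fun hc => (Option.some_ne_none _ hc).elim⟩
  else ⟨none, fun _ => ⟨x, fun Γ hx => h ⟨Γ, hx⟩⟩⟩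

end Completed

section Extension

/-- Extending the language with a countably infinite set of new nominals at each sort. -/
def Lang.addNom (L : Lang Sg) : Lang Sg :=
  { L with NOM := fun s => L.NOM s ⊕ ℕ }

/-- The inclusion of formulas of the original language into the extended language. -/
def Form.mapNom : ∀ {s}, Form Sg L s → Form Sg L.addNom s
  | _, .prop p => .prop p
  | _, .nom j => .nom (Sum.inl j)
  | _, .svar x => .svar x
  | _, .neg φ => .neg φ.mapNom
  | _, .or φ ψ => .or φ.mapNom ψ.mapNom
  | _, .app σ φs => .app σ (fun i => (φs i).mapNom)
  | _, .all x φ => .all x φ.mapNom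

end Extension
/-! ### The many-sorted hybrid modal logic `H_Σ(@_z,∀)` -/

/-- Formulas of the many-sorted hybrid logic `H_Σ(@_z,∀)`, with satisfaction
operators `@_z^s` indexed by state symbols. -/
inductive AForm (Sg : Sig) (L : Lang Sg) : Sg.S → Type where
  | prop {s} : L.PROP s → AForm Sg L s
  | nom {s} : L.NOM s → AForm Sg L s
  | svar {s} : L.SVAR s → AForm Sg L s
  | neg {s} : AForm Sg L s → AForm Sg L s
  | or {s} : AForm Sg L s → AForm Sg L s → AForm Sg L s
  | app (σ : Sg.Op) : (∀ i, AForm Sg L (Sg.arg σ i)) → AForm Sg L (Sg.res σ)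
  | all {s t} : L.SVAR t → AForm Sg L s → AForm Sg L s
  | at_ {s t} : StSym L t → AForm Sg L t → AForm Sg L s

namespace AForm

def imp {s} (φ ψ : AForm Sg L s) : AForm Sg L s := .or (.neg φ) ψ

def and {s} (φ ψ : AForm Sg L s) : AForm Sg L s := .neg (.or (.neg φ) (.neg ψ))

def iff {s} (φ ψ : AForm Sg L s) : AForm Sg L s := and (imp φ ψ) (imp ψ φ)

noncomputable def top (s : Sg.S) : AForm Sg L s :=
  .or (.prop (Classical.choice (L.neP s))) (.neg (.prop (Classical.choice (L.neP s))))

noncomputable def bot (s : Sg.S) : AForm Sg L s := .neg (top s)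

end AForm

/-- A state symbol viewed as a formula. -/
def symForm {t} : StSym L t → AForm Sg L t
  | .inl j => .nom j
  | .inr x => .svar x

/-- The dual modal operator `σ□` for `H_Σ(@_z,∀)`. -/
def dappA (σ : Sg.Op) (φs : ∀ i, AForm Sg L (Sg.arg σ i)) : AForm Sg L (Sg.res σ) :=
  .neg (.app σ fun i => .neg (φs i))

/-- The existential binder for `H_Σ(@_z,∀)`. -/
def exiA {s t} (x : L.SVAR t) (φ : AForm Sg L s) : AForm Sg L s := .neg (.all x (.neg φ))

/-- Free state variables of an `H_Σ(@_z,∀)`-formula. -/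
def freeA : ∀ {s}, AForm Sg L s → Set (Σ u, L.SVAR u)
  | _, .prop _ => ∅
  | _, .nom _ => ∅
  | s, .svar y => {⟨s, y⟩}
  | _, .neg φ => freeA φ
  | _, .or φ ψ => freeA φ ∪ freeA ψ
  | _, .app _ φs => ⋃ i, freeA (φs i)
  | _, .all y φ => freeA φ \ {⟨_, y⟩}
  | _, .at_ z φ =>
      (match z with
        | .inl _ => ∅
        | .inr x => {⟨_, x⟩}) ∪ freeA φ

/-- All state variables occurring in an `H_Σ(@_z,∀)`-formula (free, bound, or as
subscripts of satisfaction operators). -/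
def occA : ∀ {s}, AForm Sg L s → Set (Σ u, L.SVAR u)
  | _, .prop _ => ∅
  | _, .nom _ => ∅
  | s, .svar y => {⟨s, y⟩}
  | _, .neg φ => occA φ
  | _, .or φ ψ => occA φ ∪ occA ψ
  | _, .app _ φs => ⋃ i, occA (φs i)
  | _, .all y φ => insert ⟨_, y⟩ (occA φ)
  | _, .at_ z φ =>
      (match z with
        | .inl _ => ∅
        | .inr x => {⟨_, x⟩}) ∪ occA φ

/-- Substitution of the formula `ζ` for free occurrences of the state variable `x`. -/
noncomputable def substA {t : Sg.S} (x : L.SVAR t) (ζ : AForm Sg L t) :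
    ∀ {s}, AForm Sg L s → AForm Sg L s
  | _, .prop p => .prop p
  | _, .nom j => .nom j
  | s, .svar y =>
      if h : (⟨s, y⟩ : Σ u, L.SVAR u) = ⟨t, x⟩ then
        cast (congrArg (AForm Sg L) (congrArg Sigma.fst h)).symm ζ
      else .svar y
  | _, .neg φ => .neg (substA x ζ φ)
  | _, .or φ ψ => .or (substA x ζ φ) (substA x ζ ψ)
  | _, .app σ φs => .app σ (fun i => substA x ζ (φs i))
  | s, .all y φ =>
      if (⟨_, y⟩ : Σ u, L.SVAR u) = ⟨t, x⟩ then .all y φ else .all y (substA x ζ φ)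
  | _, .at_ z φ => .at_ z (substA x ζ φ)

/-- Substitutability of the state variable `y` for `x` in an `H_Σ(@_z,∀)`-formula. -/
def SubstitutableA {t u : Sg.S} (x : L.SVAR t) (y : L.SVAR u) : ∀ {s}, AForm Sg L s → Prop
  | _, .prop _ => True
  | _, .nom _ => True
  | _, .svar _ => True
  | _, .neg φ => SubstitutableA x y φ
  | _, .or φ ψ => SubstitutableA x y φ ∧ SubstitutableA x y ψ
  | _, .app _ φs => ∀ i, SubstitutableA x y (φs i)
  | _, .all z φ =>
      (⟨t, x⟩ : Σ v, L.SVAR v) ∉ freeA (AForm.all z φ) ∨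
      ((⟨_, z⟩ : Σ v, L.SVAR v) ≠ ⟨u, y⟩ ∧ SubstitutableA x y φ)
  | _, .at_ _ φ => SubstitutableA x y φ

/-- The denotation `Den_g(z)` of a state symbol: the unique element of `V(z)` for a
nominal (in a standard model), and `g(z)` for a state variable. -/
noncomputable def den (M : Model Sg L) (g : Assign M) {t} : StSym L t → M.W t
  | .inl j => if h : ∃ v, M.Vn t j = {v} then h.choose else Classical.choice (M.ne t)
  | .inr x => g t x

/-- The satisfaction relation of `H_Σ(@_z,∀)`. -/
def SatA (M : Model Sg L) : ∀ {s}, Assign M → AForm Sg L s → M.W s → Prop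
  | s, _, .prop p, w => w ∈ M.Vp s p
  | s, _, .nom j, w => w ∈ M.Vn s j
  | s, g, .svar x, w => w = g s x
  | _, g, .neg φ, w => ¬ SatA M g φ w
  | _, g, .or φ ψ, w => SatA M g φ w ∨ SatA M g ψ w
  | _, g, .app σ φs, w => ∃ ws, M.R σ w ws ∧ ∀ i, SatA M g (φs i) (ws i)
  | _, g, .all x φ, w => ∀ g', Variant g g' x → SatA M g' φ w
  | _, g, .at_ z φ, _ => SatA M g φ (den M g z)

/-- A model with assignment is named if every world is the denotation of a state symbol. -/
def NamedM (M : Model Sg L) (g : Assign M) : Prop :=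
  ∀ (t) (w : M.W t), ∃ z : StSym L t, den M g z = w

/-- Instantiation of a propositional skeleton by `H_Σ(@_z,∀)`-formulas. -/
def PForm.instA {s} (f : ℕ → AForm Sg L s) : PForm → AForm Sg L s
  | .atom n => f n
  | .neg p => .neg (p.instA f)
  | .or p q => .or (p.instA f) (q.instA f)

/-- The deductive system of `H_Σ(@_z,∀)`, extended with a set `Λ` of additional axioms. -/
inductive PrfAt (Λ : ∀ t, Set (AForm Sg L t)) : ∀ {s : Sg.S}, AForm Sg L s → Prop where
  | hyp {s} {φ : AForm Sg L s} : φ ∈ Λ s → PrfAt Λ φ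
  | taut {s} (p : PForm) (f : ℕ → AForm Sg L s) : p.Taut → PrfAt Λ (p.instA f)
  | kax (σ : Sg.Op) (i : Fin (Sg.n σ)) (φs : ∀ j, AForm Sg L (Sg.arg σ j))
      (φ χ : AForm Sg L (Sg.arg σ i)) :
      PrfAt Λ (AForm.imp (dappA σ (Function.update φs i (AForm.imp φ χ)))
        (AForm.imp (dappA σ (Function.update φs i φ)) (dappA σ (Function.update φs i χ))))
  | dualax (σ : Sg.Op) (φs : ∀ j, AForm Sg L (Sg.arg σ j)) :
      PrfAt Λ (AForm.iff (.app σ φs) (.neg (dappA σ fun j => .neg (φs j))))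
  | kat {s t} (z : StSym L t) (φ ψ : AForm Sg L t) :
      PrfAt Λ (AForm.imp (.at_ (s := s) z (AForm.imp φ ψ))
        (AForm.imp (.at_ (s := s) z φ) (.at_ (s := s) z ψ)))
  | agree {t t' u} (y : StSym L t') (z : StSym L u) (φ : AForm Sg L u) :
      PrfAt Λ (AForm.iff (.at_ (s := t) y (.at_ (s := t') z φ)) (.at_ (s := t) z φ))
  | selfdual {s t} (z : StSym L t) (φ : AForm Sg L t) :
      PrfAt Λ (AForm.iff (.at_ (s := s) z φ) (.neg (.at_ (s := s) z (.neg φ))))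
  | intro {s} (z : StSym L s) (φ : AForm Sg L s) :
      PrfAt Λ (AForm.imp (symForm z) (AForm.iff φ (.at_ (s := s) z φ)))
  | back (σ : Sg.Op) (i : Fin (Sg.n σ)) (φs : ∀ j, AForm Sg L (Sg.arg σ j))
      {t} (z : StSym L t) (ψ : AForm Sg L t) :
      PrfAt Λ (AForm.imp (.app σ (Function.update φs i (.at_ (s := Sg.arg σ i) z ψ)))
        (.at_ (s := Sg.res σ) z ψ))
  | ref {s t} (z : StSym L t) : PrfAt Λ (.at_ (s := s) z (symForm z))
  | q1 {s t} (x : L.SVAR t) (φ ψ : AForm Sg L s)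
      (hx : (⟨t, x⟩ : Σ v, L.SVAR v) ∉ freeA φ) :
      PrfAt Λ (AForm.imp (.all x (AForm.imp φ ψ)) (AForm.imp φ (.all x ψ)))
  | q2v {s t} (x y : L.SVAR t) (φ : AForm Sg L s) (h : SubstitutableA x y φ) :
      PrfAt Λ (AForm.imp (.all x φ) (substA x (.svar y) φ))
  | q2n {s t} (x : L.SVAR t) (j : L.NOM t) (φ : AForm Sg L s) :
      PrfAt Λ (AForm.imp (.all x φ) (substA x (.nom j) φ))
  | nameax {s} (x : L.SVAR s) : PrfAt Λ (exiA x (AForm.svar x))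
  | barcan (σ : Sg.Op) (i : Fin (Sg.n σ)) {t} (x : L.SVAR t)
      (φs : ∀ j, AForm Sg L (Sg.arg σ j)) :
      PrfAt Λ (AForm.imp (.all x (dappA σ φs)) (dappA σ (Function.update φs i (.all x (φs i)))))
  | barcanAt {s t u} (x : L.SVAR t) (z : StSym L u) (φ : AForm Sg L u)
      (h : (⟨u, z⟩ : Σ v, StSym L v) ≠ ⟨t, Sum.inr x⟩) :
      PrfAt Λ (AForm.imp (.all x (.at_ (s := s) z φ)) (.at_ (s := s) z (.all x φ)))
  | nomx {s u} (z y : StSym L u) (x : L.SVAR u) :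
      PrfAt Λ (AForm.imp (AForm.and (.at_ (s := s) z (.svar x)) (.at_ (s := s) y (.svar x)))
        (.at_ (s := s) z (symForm y)))
  | mp {s} {φ ψ : AForm Sg L s} : PrfAt Λ (AForm.imp φ ψ) → PrfAt Λ φ → PrfAt Λ ψ
  | ug (σ : Sg.Op) (i : Fin (Sg.n σ)) (φs : ∀ j, AForm Sg L (Sg.arg σ j))
      {φ : AForm Sg L (Sg.arg σ i)} : PrfAt Λ φ → PrfAt Λ (dappA σ (Function.update φs i φ))
  | gen {s t} (x : L.SVAR t) {φ : AForm Sg L s} : PrfAt Λ φ → PrfAt Λ (.all x φ)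
  | broadcast {s s' t} (z : StSym L t) (φ : AForm Sg L t) :
      PrfAt Λ (.at_ (s := s) z φ) → PrfAt Λ (.at_ (s := s') z φ)
  | genAt {s t} (z : StSym L t) {φ : AForm Sg L t} :
      PrfAt Λ φ → PrfAt Λ (.at_ (s := s) z φ)
  | paste0 {s u} (z : StSym L u) (y : L.SVAR u) (φ : AForm Sg L u) (ψ : AForm Sg L s)
      (hzy : z ≠ .inr y) (hyφ : (⟨u, y⟩ : Σ v, L.SVAR v) ∉ occA φ)
      (hyψ : (⟨u, y⟩ : Σ v, L.SVAR v) ∉ occA ψ) :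
      PrfAt Λ (AForm.imp (.at_ (s := s) z (AForm.and (.svar y) φ)) ψ) →
      PrfAt Λ (AForm.imp (.at_ (s := s) z φ) ψ)
  | paste1 {s} (σ : Sg.Op) (i : Fin (Sg.n σ)) (φs : ∀ j, AForm Sg L (Sg.arg σ j))
      (z : StSym L (Sg.res σ)) (y : L.SVAR (Sg.arg σ i)) (ψ : AForm Sg L s)
      (hzy : (⟨Sg.res σ, z⟩ : Σ v, StSym L v) ≠ ⟨Sg.arg σ i, Sum.inr y⟩)
      (hyφ : (⟨Sg.arg σ i, y⟩ : Σ v, L.SVAR v) ∉ occA (φs i))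
      (hyψ : (⟨Sg.arg σ i, y⟩ : Σ v, L.SVAR v) ∉ occA ψ) :
      PrfAt Λ (AForm.imp
        (.at_ (s := s) z (.app σ (Function.update φs i (AForm.and (.svar y) (φs i))))) ψ) →
      PrfAt Λ (AForm.imp (.at_ (s := s) z (.app σ φs)) ψ)

/-- Conjunction of a list of `H_Σ(@_z,∀)`-formulas. -/
noncomputable def conjA {s} : List (AForm Sg L s) → AForm Sg L s
  | [] => AForm.top s
  | φ :: l => AForm.and φ (conjA l)

/-- Consistency with respect to `H_Σ(@_z,∀)` extended with the axioms `Λ`. -/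
def ConsistentA (Λ : ∀ t, Set (AForm Sg L t)) {s} (Γ : Set (AForm Sg L s)) : Prop :=
  ¬ ∃ l : List (AForm Sg L s), (∀ φ ∈ l, φ ∈ Γ) ∧ PrfAt Λ (AForm.imp (conjA l) (AForm.bot s))

/-- Maximal consistent sets for `H_Σ(@_z,∀)` extended with `Λ`. -/
def MaxConsistentA (Λ : ∀ t, Set (AForm Sg L t)) {s} (Γ : Set (AForm Sg L s)) : Prop :=
  ConsistentA Λ Γ ∧ ∀ Δ, ConsistentA Λ Δ → Γ ⊆ Δ → Δ = Γ

/-- The empty set of extra axioms: the plain system `H_Σ(@_z,∀)`. -/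
def noAx : ∀ t, Set (AForm Sg L t) := fun _ => ∅

/-- A set of formulas is named if one of its elements is a nominal. -/
def NamedSet {s} (Γ : Set (AForm Sg L s)) : Prop := ∃ j : L.NOM s, AForm.nom j ∈ Γ

/-- `Γ` is 0-pasted. -/
def Pasted0 {s} (Γ : Set (AForm Sg L s)) : Prop :=
  ∀ {u} (z : StSym L u) (φ : AForm Sg L u), AForm.at_ (s := s) z φ ∈ Γ →
    ∃ j : L.NOM u, AForm.at_ (s := s) z (AForm.and (.nom j) φ) ∈ Γ

/-- `Γ` is 1-pasted. -/
def Pasted1 {s} (Γ : Set (AForm Sg L s)) : Prop :=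
  ∀ (σ : Sg.Op) (i : Fin (Sg.n σ)) (z : StSym L (Sg.res σ))
    (φs : ∀ j, AForm Sg L (Sg.arg σ j)), AForm.at_ (s := s) z (.app σ φs) ∈ Γ →
    ∃ j : L.NOM (Sg.arg σ i),
      AForm.at_ (s := s) z (.app σ (Function.update φs i (AForm.and (.nom j) (φs i)))) ∈ Γ

/-- `Γ` is pasted: both 0-pasted and 1-pasted. -/
def PastedSet {s} (Γ : Set (AForm Sg L s)) : Prop := Pasted0 Γ ∧ Pasted1 Γ

/-- `Γ` is `@`-witnessed. -/
def AtWitnessed {s} (Γ : Set (AForm Sg L s)) : Prop :=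
  (∀ {u t} (k : L.NOM u) (x : L.SVAR t) (φ : AForm Sg L u),
      AForm.at_ (s := s) (Sum.inl k) (exiA x φ) ∈ Γ →
      ∃ j : L.NOM t, AForm.at_ (s := s) (Sum.inl k) (substA x (.nom j) φ) ∈ Γ) ∧
  (∀ {t} (x : L.SVAR t), ∃ j : L.NOM t, AForm.at_ (s := s) (Sum.inl j) (AForm.svar x) ∈ Γ)

/-- `Δ_z`: the set of formulas holding at the state named by `z`, relative to a
maximal consistent set `Γ` of sort `s`. -/
def DeltaS {s} (Γ : Set (AForm Sg L s)) {u} (z : StSym L u) : Set (AForm Sg L u) :=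
  {φ | AForm.at_ (s := s) z φ ∈ Γ}

/-- The canonical relation for `H_Σ(@_z,∀)`. -/
def CanRA (σ : Sg.Op) (w : Set (AForm Sg L (Sg.res σ)))
    (us : ∀ i, Set (AForm Sg L (Sg.arg σ i))) : Prop :=
  ∀ ψs : ∀ i, AForm Sg L (Sg.arg σ i), (∀ i, ψs i ∈ us i) → AForm.app σ ψs ∈ w

section NamedModel

variable (Γf : ∀ t, Set (AForm Sg L t))

/-- `Δ_z` relative to an `S`-sorted family of maximal consistent sets. -/
def DeltaF {u} (z : StSym L u) : Set (AForm Sg L u) :=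
  {φ | AForm.at_ (s := u) z φ ∈ Γf u}

/-- Worlds of sort `t` of the named model generated by `Γf`: the sets `Δ_z`. -/
def NW (t : Sg.S) : Type := {Δ : Set (AForm Sg L t) // ∃ z : StSym L t, Δ = DeltaF Γf z}

/-- The named model generated by a named, pasted and `@`-witnessed family. -/
noncomputable def namedModel : Model Sg L where
  W := NW Γf
  ne := fun t => ⟨⟨DeltaF Γf (Sum.inr (Classical.choice (L.neS t))), ⟨_, rfl⟩⟩⟩
  R := fun σ w ws => CanRA σ w.val (fun i => (ws i).val)
  Vp := fun _ p => {w | AForm.prop p ∈ w.val}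
  Vn := fun _ j => {w | AForm.nom j ∈ w.val}

/-- The natural assignment of the named model: each state variable denotes the
world containing it. -/
noncomputable def naturalAssign : Assign (namedModel Γf) := fun t x =>
  if h : ∃ w : NW Γf t, AForm.svar x ∈ w.val then h.choose
  else Classical.choice ((namedModel Γf).ne t)

end NamedModel

/-- The inclusion of `H_Σ(@_z,∀)`-formulas into the language extended with new nominals. -/
def AForm.mapNom : ∀ {s}, AForm Sg L s → AForm Sg L.addNom s
  | _, .prop p => .prop p
  | _, .nom j => .nom (Sum.inl j)
  | _, .svar x => .svar x
  | _, .neg φ => .neg φ.mapNom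
  | _, .or φ ψ => .or φ.mapNom ψ.mapNom
  | _, .app σ φs => .app σ (fun i => (φs i).mapNom)
  | _, .all x φ => .all x φ.mapNom
  | _, .at_ z φ => .at_ (Sum.map Sum.inl id z) φ.mapNom
/-! ### Matching logic -/

/-- Matching logic patterns over a signature (with state/element variables `SV`),
built from variables, `¬`, `∨`, the symbols of the signature, and `∃`.
These coincide with the hybrid formulas `Form⁰` containing no nominals and no
propositional variables. -/
inductive Pat (Sg : Sig) (SV : Sg.S → Type) : Sg.S → Type where
  | svar {s} : SV s → Pat Sg SV s
  | neg {s} : Pat Sg SV s → Pat Sg SV s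
  | or {s} : Pat Sg SV s → Pat Sg SV s → Pat Sg SV s
  | app (σ : Sg.Op) : (∀ i, Pat Sg SV (Sg.arg σ i)) → Pat Sg SV (Sg.res σ)
  | ex {s t} : SV t → Pat Sg SV s → Pat Sg SV s

namespace Pat

variable {SV : Sg.S → Type}

def imp {s} (φ ψ : Pat Sg SV s) : Pat Sg SV s := .or (.neg φ) ψ

def and {s} (φ ψ : Pat Sg SV s) : Pat Sg SV s := .neg (.or (.neg φ) (.neg ψ))

def iff {s} (φ ψ : Pat Sg SV s) : Pat Sg SV s := and (imp φ ψ) (imp ψ φ)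

end Pat

/-- A matching logic model: nonempty carriers and powerset-valued interpretations. -/
structure MLModel (Sg : Sig) : Type 1 where
  M : Sg.S → Type
  ne : ∀ s, Nonempty (M s)
  interp : ∀ σ : Sg.Op, (∀ i, M (Sg.arg σ i)) → Set (M (Sg.res σ))

/-- An `M`-valuation of the element variables. -/
def Valu {Sg : Sig} (SV : Sg.S → Type) (K : MLModel Sg) := ∀ s, SV s → K.M s

/-- Valuations agreeing except possibly at `x`. -/
def VariantV {SV : Sg.S → Type} {K : MLModel Sg} (ρ ρ' : Valu SV K) {t} (x : SV t) : Prop :=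
  ∀ (u) (y : SV u), (⟨u, y⟩ : Σ v, SV v) ≠ ⟨t, x⟩ → ρ u y = ρ' u y

/-- The extension `ρ̄` of a valuation to all patterns (the pointwise extension is
used for the symbols, and `ρ̄(∃x.φ) = ⋃_a ρ̄[a/x](φ)`). -/
def extV {SV : Sg.S → Type} (K : MLModel Sg) : ∀ {s}, Valu SV K → Pat Sg SV s → Set (K.M s)
  | s, ρ, .svar x => {ρ s x}
  | _, ρ, .neg φ => (extV K ρ φ)ᶜ
  | _, ρ, .or φ ψ => extV K ρ φ ∪ extV K ρ ψ
  | _, ρ, .app σ φs => {m | ∃ as, (∀ i, as i ∈ extV K ρ (φs i)) ∧ m ∈ K.interp σ as}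
  | _, ρ, .ex x φ => {m | ∃ ρ', VariantV ρ ρ' x ∧ m ∈ extV K ρ' φ}

/-- `(M,ρ) ⊨^{ML}_s φ` : the pattern `φ` is matched by every element. -/
def MLSat {SV : Sg.S → Type} (K : MLModel Sg) (ρ : Valu SV K) {s} (φ : Pat Sg SV s) : Prop :=
  extV K ρ φ = Set.univ

/-- A hybrid-logic `(S,Σ)`-frame (no valuation needed for `Form⁰`-formulas). -/
structure Frame (Sg : Sig) : Type 1 where
  W : Sg.S → Type
  ne : ∀ s, Nonempty (W s)
  R : ∀ σ : Sg.Op, W (Sg.res σ) → (∀ i, W (Sg.arg σ i)) → Prop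

/-- An assignment into a frame. -/
def FAssign {Sg : Sig} (SV : Sg.S → Type) (F : Frame Sg) := ∀ s, SV s → F.W s

/-- Frame assignments agreeing except possibly at `x`. -/
def FVariant {SV : Sg.S → Type} {F : Frame Sg} (g g' : FAssign SV F) {t} (x : SV t) : Prop :=
  ∀ (u) (y : SV u), (⟨u, y⟩ : Σ v, SV v) ≠ ⟨t, x⟩ → g u y = g' u y

/-- Hybrid (modal) satisfaction of `Form⁰`-formulas in a frame with an assignment. -/
def SatP {SV : Sg.S → Type} (F : Frame Sg) : ∀ {s}, FAssign SV F → Pat Sg SV s → F.W s → Prop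
  | s, g, .svar x, w => w = g s x
  | _, g, .neg φ, w => ¬ SatP F g φ w
  | _, g, .or φ ψ, w => SatP F g φ w ∨ SatP F g ψ w
  | _, g, .app σ φs, w => ∃ ws, F.R σ w ws ∧ ∀ i, SatP F g (φs i) (ws i)
  | _, g, .ex x φ, w => ∃ g', FVariant g g' x ∧ SatP F g' φ w

/-- The hybrid frame associated to a matching logic model. -/
def frameOf (K : MLModel Sg) : Frame Sg where
  W := K.M
  ne := K.ne
  R := fun σ w ws => w ∈ K.interp σ ws

/-- The matching logic model associated to a hybrid frame. -/
def mlOf (F : Frame Sg) : MLModel Sg where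
  M := F.W
  ne := F.ne
  interp := fun σ ws => {w | F.R σ w ws}

/-- `Form⁰`-formulas (patterns) as formulas of the hybrid logic `H_Σ(∀)`,
with `∃xφ := ¬∀x¬φ`. -/
def Pat.toForm : ∀ {s}, Pat Sg L.SVAR s → Form Sg L s
  | _, .svar x => .svar x
  | _, .neg φ => .neg φ.toForm
  | _, .or φ ψ => .or φ.toForm ψ.toForm
  | _, .app σ φs => .app σ (fun i => (φs i).toForm)
  | _, .ex x φ => exi x φ.toForm

/-! #### The signature `Σ'` with constants for propositional variables and nominals,
and definedness symbols -/

/-- Extra symbols of `Σ'`: a constant `c_p` for each propositional variable `p`, a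
constant `c_i` for each nominal `i`, and a definedness symbol `⌈_⌉^{s₂}_{s₁}` for
every pair of sorts. -/
inductive ExtraOp (Sg : Sig) (L : Lang Sg) : Type where
  | cP : (Σ t, L.PROP t) → ExtraOp Sg L
  | cN : (Σ t, L.NOM t) → ExtraOp Sg L
  | defin : Sg.S → Sg.S → ExtraOp Sg L

/-- The extended signature `Σ' = Σ ∪ Σ_PROP ∪ Σ_NOM` (together with definedness symbols). -/
def SigC (Sg : Sig) (L : Lang Sg) : Sig where
  S := Sg.S
  Op := Sg.Op ⊕ ExtraOp Sg L
  n := fun σ => match σ with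
    | .inl σ => Sg.n σ
    | .inr (.cP _) => 0
    | .inr (.cN _) => 0
    | .inr (.defin _ _) => 1
  arg := fun σ => match σ with
    | .inl σ => Sg.arg σ
    | .inr (.cP _) => Fin.elim0
    | .inr (.cN _) => Fin.elim0
    | .inr (.defin s1 _) => fun _ => s1
  res := fun σ => match σ with
    | .inl σ => Sg.res σ
    | .inr (.cP c) => c.1
    | .inr (.cN c) => c.1
    | .inr (.defin _ s2) => s2

/-- The definedness pattern `⌈φ⌉^{s₂}_{s₁}`. -/
def defP {s1 : Sg.S} (s2 : Sg.S) (φ : Pat (SigC Sg L) L.SVAR s1) : Pat (SigC Sg L) L.SVAR s2 :=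
  .app (Sg := SigC Sg L) (Sum.inr (ExtraOp.defin s1 s2)) (fun _ => φ)

/-- The equality pattern `φ =^{s₂}_{s₁} φ' := ⌊φ ↔ φ'⌋^{s₂}_{s₁}`. -/
def eqP {s1 : Sg.S} (s2 : Sg.S) (φ ψ : Pat (SigC Sg L) L.SVAR s1) : Pat (SigC Sg L) L.SVAR s2 :=
  .neg (defP s2 (.neg (Pat.iff φ ψ)))

/-- The constant pattern `c_i` for a nominal `i`. -/
def cNom {t : Sg.S} (i : L.NOM t) : Pat (SigC Sg L) L.SVAR t :=
  .app (Sg := SigC Sg L) (Sum.inr (ExtraOp.cN ⟨t, i⟩)) (fun h => Fin.elim0 h)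

/-- The constant pattern `c_p` for a propositional variable `p`. -/
def cProp {t : Sg.S} (p : L.PROP t) : Pat (SigC Sg L) L.SVAR t :=
  .app (Sg := SigC Sg L) (Sum.inr (ExtraOp.cP ⟨t, p⟩)) (fun h => Fin.elim0 h)

/-- A state symbol as a pattern over `Σ'`. -/
def symPat {t : Sg.S} : StSym L t → Pat (SigC Sg L) L.SVAR t
  | .inl j => cNom j
  | .inr x => .svar x

/-- The translation `φ ↦ φ'` of `H_Σ(@_z,∀)`-formulas into matching logic patterns
over `Σ'`: propositional variables and nominals become constants, `∀x := ¬∃x¬`, and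
`@_z^s φ := ⌈z ∧ φ⌉^s`. -/
def AForm.toPat : ∀ {s}, AForm Sg L s → Pat (SigC Sg L) L.SVAR s
  | _, .prop p => cProp p
  | _, .nom j => cNom j
  | _, .svar x => .svar x
  | _, .neg φ => .neg φ.toPat
  | _, .or φ ψ => .or φ.toPat ψ.toPat
  | _, .app σ φs => .app (Sg := SigC Sg L) (Sum.inl σ) (fun i => (φs i).toPat)
  | _, .all x φ => .neg (.ex x (.neg φ.toPat))
  | s, .at_ (t := t) z φ => defP s (Pat.and (symPat z) φ.toPat)

/-- A matching logic model over `Σ'` interprets definedness correctly if each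
definedness symbol applied to any element yields the whole carrier. -/
def DefOK (K : MLModel (SigC Sg L)) : Prop :=
  ∀ (s1 s2 : Sg.S) (as : ∀ i : Fin 1, K.M s1), K.interp (Sum.inr (ExtraOp.defin s1 s2)) as = Set.univ

/-- The theory `Γ' = {∃x (x = c_i) : i ∈ NOM}` (at every context sort), forcing the
nominal constants to be functional (singleton) patterns. -/
def GammaC (Sg : Sig) (L : Lang Sg) : ∀ s2 : Sg.S, Set (Pat (SigC Sg L) L.SVAR s2) :=
  fun s2 => {χ | ∃ (t : Sg.S) (i : L.NOM t) (x : L.SVAR t),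
    χ = Pat.ex (Sg := SigC Sg L) x (eqP s2 (.svar x) (cNom i))}

/-- A matching logic model satisfies the theory `Γ'`. -/
def SatGammaC (K : MLModel (SigC Sg L)) : Prop :=
  ∀ (s2 : Sg.S), ∀ χ ∈ GammaC Sg L s2, ∀ ρ : Valu (Sg := SigC Sg L) L.SVAR K, extV K ρ χ = Set.univ

def Model.toFrame (M : Model Sg L) : Frame Sg := ⟨M.W, M.ne, M.R⟩

noncomputable def Frame.toStandardModel (F : Frame Sg) : Model Sg L where
  W := F.W
  ne := F.ne
  R := F.R
  Vp := fun _ _ => Set.univ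
  Vn := fun s _ => {Classical.choice (F.ne s)}

theorem Frame.toStandardModel_standard (F : Frame Sg) :
    (F.toStandardModel : Model Sg L).Standard :=
  fun _ _ => ⟨_, rfl⟩

theorem sat_toForm_iff_mem_extV (M : Model Sg L) {s : Sg.S} (φ : Pat Sg L.SVAR s)
    (g : Assign M) (w : M.W s) :
    Sat M g φ.toForm w ↔ w ∈ extV (mlOf M.toFrame) g φ := by
  induction φ generalizing g with
  | svar x => exact Iff.rfl
  | neg φ ih => exact not_congr (ih g w)
  | or φ ψ ihφ ihψ => exact or_congr (ihφ g w) (ihψ g w)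
  | app σ φs ih =>
    simp only [Pat.toForm, Sat, extV]
    exact ⟨fun ⟨ws, hR, hws⟩ => ⟨ws, fun i => (ih i g (ws i)).1 (hws i), hR⟩,
      fun ⟨ws, hws, hR⟩ => ⟨ws, hR, fun i => (ih i g (ws i)).2 (hws i)⟩⟩
  | ex x φ ih =>
    simp only [Pat.toForm, exi, Sat, extV, not_forall, not_not, exists_prop]
    exact ⟨fun ⟨g', hg', hw⟩ => ⟨g', hg', (ih g' w).1 hw⟩,
      fun ⟨g', hg', hw⟩ => ⟨g', hg', (ih g' w).2 hw⟩⟩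

theorem ml_hybrid_validity {Sg : Sig} {L : Lang Sg} {s : Sg.S} (φ : Pat Sg L.SVAR s) :
    (∀ (K : MLModel Sg) (ρ : Valu L.SVAR K), MLSat K ρ φ) ↔
    (∀ (M : Model Sg L), M.Standard →
      ∀ (g : Assign M) (w : M.W s), Sat M g φ.toForm w) := by
  constructor
  · intro hML M _ g w
    have hw : w ∈ extV (mlOf M.toFrame) g φ := (hML (mlOf M.toFrame) g).symm ▸ Set.mem_univ w
    exact (sat_toForm_iff_mem_extV M φ g w).2 hw
  · intro hHyb K ρ
    -- `mlOf (frameOf K)` is `K` up to definitional unfolding.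
    let M : Model Sg L := (frameOf K).toStandardModel
    exact Set.eq_univ_of_forall fun w =>
      (sat_toForm_iff_mem_extV M φ ρ w).1 (hHyb M (Frame.toStandardModel_standard _) ρ w)

end HybridML
end

section
/- Representation of hybrid formulas in Matching Logic (semantic form of Theorem ml2): Let (S,Σ) be a many-sorted signature and φ a formula of sort s of H_Σ(@_z,∀) over (S,Σ). Let Σ' = Σ ∪ {c_p : p ∈ PROP} ∪ {c_i : i ∈ NOM} (each c_p, c_i a constant symbol of the appropriate sort), let Γ' = {∃x (x = c_i) : i ∈ NOM}, and let φ' be obtained from φ by replacing every propositional variable p by c_p and every nominal i by c_i. Then φ is valid in H_Σ(@_z,∀) over (S,Σ) (i.e., M,g,w ⊨_s φ for every standard model M, assignment g, and world w of sort s) if and only if φ' holds in every matching logic model over (S,Σ') that satisfies Γ' (i.e., for every such M' and every M'-valuation ρ, ρ̄(φ') = M'_s). Consequently, by completeness, ⊢_s^{HModL_(S,Σ)} φ iff Γ' ⊢_{ML_(S,Σ')} φ'. -/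
set_option maxHeartbeats 1000000

attribute [local instance] Classical.propDecidable

namespace HybridML

variable {Sg : Sig} {L : Lang Sg}

/-! Standard hybrid models and matching logic models over `Σ'` satisfying `Γ'` (with
definedness interpreted as intended) are the same data: worlds are carrier elements,
`R_σ w ws` is `w ∈ σ(ws)`, and `V(p)`, `V(i)` are the interpretations of `c_p`, `c_i`.
The axioms `∃x (x = c_i)` say exactly that every `c_i` is a singleton, i.e. that the hybrid
model is standard. Under this correspondence the extension of `φ'` is the set of worlds
satisfying `φ`, by induction on `φ`; for `@_z φ = ⌈z ∧ φ⌉` one uses that `⌈ψ⌉` is everything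
or nothing according as `ψ` is matched somewhere or not. -/

section Patterns

variable {Sg : Sig} {SV : Sg.S → Type} {K : MLModel Sg} (ρ : Valu SV K)

lemma extV_and {t} (α β : Pat Sg SV t) :
    extV K ρ (Pat.and α β) = extV K ρ α ∩ extV K ρ β := by
  simp only [Pat.and, extV, Set.compl_union, compl_compl]

lemma extV_iff_eq_univ {t} (α β : Pat Sg SV t) :
    extV K ρ (Pat.iff α β) = Set.univ ↔ extV K ρ α = extV K ρ β := by
  simp only [Pat.iff, Pat.imp, extV_and, extV, Set.mem_inter_iff,
    Set.mem_union, Set.mem_compl_iff, Set.ext_iff]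
  exact forall_congr' fun _ => by tauto

lemma extV_app_of_isEmpty {σ : Sg.Op} (hσ : IsEmpty (Fin (Sg.n σ)))
    (φs : ∀ i, Pat Sg SV (Sg.arg σ i)) (as : ∀ i, K.M (Sg.arg σ i)) :
    extV K ρ (.app σ φs) = K.interp σ as := by
  ext w
  exact ⟨fun ⟨bs, _, hw⟩ => Subsingleton.elim bs as ▸ hw, fun hw => ⟨as, isEmptyElim, hw⟩⟩

noncomputable def Valu.update {t} (x : SV t) (v : K.M t) : Valu SV K :=
  Function.update ρ t (Function.update (ρ t) x v)

lemma Valu.update_apply_self {t} (x : SV t) (v : K.M t) : ρ.update x v t x = v :=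
  (congrFun (Function.update_self (β := fun u => SV u → K.M u) ..) x).trans
    (Function.update_self ..)

lemma variantV_update {t} (x : SV t) (v : K.M t) : VariantV ρ (ρ.update x v) x := by
  intro u y hne
  by_cases hu : u = t
  · subst hu
    have hy : y ≠ x := fun h => hne (h ▸ rfl)
    calc ρ u y = Function.update (ρ u) x v y := (Function.update_of_ne hy ..).symm
      _ = _ := congrFun (Function.update_self (β := fun u => SV u → K.M u) ..).symm y
  · exact congrFun (Function.update_of_ne (β := fun u => SV u → K.M u) hu ..).symm y

end Patterns

def Model.toMLModel (M : Model Sg L) : MLModel (SigC Sg L) where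
  M := M.W
  ne := M.ne
  interp
    | .inl σ => fun ws => {w | M.R σ w ws}
    | .inr (.cP c) => fun _ => M.Vp c.1 c.2
    | .inr (.cN c) => fun _ => M.Vn c.1 c.2
    | .inr (.defin _ _) => fun _ => Set.univ

def MLModel.toModel (K : MLModel (SigC Sg L)) : Model Sg L where
  W := K.M
  ne := K.ne
  R σ w ws := w ∈ K.interp (.inl σ) ws
  Vp t p := K.interp (.inr (.cP ⟨t, p⟩)) fun i => i.elim0
  Vn t j := K.interp (.inr (.cN ⟨t, j⟩)) fun i => i.elim0

lemma Model.defOK_toMLModel (M : Model Sg L) : DefOK M.toMLModel := fun _ _ _ => rfl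

lemma Model.Vn_eq_singleton_den {M : Model Sg L} (hM : M.Standard) (g : Assign M) {t}
    (j : L.NOM t) : M.Vn t j = {den M g (.inl j)} := by
  have hj := hM t j
  rw [den, dif_pos hj]
  exact hj.choose_spec

section Translation

variable {K : MLModel (SigC Sg L)} (ρ : Valu (Sg := SigC Sg L) L.SVAR K)

lemma extV_cNom {t} (j : L.NOM t) : extV K ρ (cNom j) = K.toModel.Vn t j :=
  extV_app_of_isEmpty ρ (by exact Fin.isEmpty') _ _

lemma extV_cProp {t} (p : L.PROP t) : extV K ρ (cProp p) = K.toModel.Vp t p :=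
  extV_app_of_isEmpty ρ (by exact Fin.isEmpty') _ _

lemma extV_symPat (hK : K.toModel.Standard) {t} (z : StSym L t) :
    extV K ρ (symPat z) = {den K.toModel ρ z} := by
  cases z with
  | inl j =>
    rw [symPat, extV_cNom]
    exact Model.Vn_eq_singleton_den hK ρ j
  | inr x => rfl

variable (hdef : DefOK K)
include hdef

lemma mem_extV_defP {s1 s2 : Sg.S} (ψ : Pat (SigC Sg L) L.SVAR s1) (w : K.M s2) :
    w ∈ extV K ρ (defP s2 ψ) ↔ (extV K ρ ψ).Nonempty :=
  ⟨fun ⟨as, has, _⟩ => ⟨as ⟨0, Nat.zero_lt_one⟩, has ⟨0, Nat.zero_lt_one⟩⟩,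
    fun ⟨a, ha⟩ => ⟨fun _ => a, fun _ => ha, hdef s1 s2 _ ▸ Set.mem_univ w⟩⟩

lemma mem_extV_eqP {s1 s2 : Sg.S} (α β : Pat (SigC Sg L) L.SVAR s1) (w : K.M s2) :
    w ∈ extV K ρ (eqP s2 α β) ↔ extV K ρ α = extV K ρ β := by
  show w ∈ (extV K ρ (defP s2 (.neg (Pat.iff α β))))ᶜ ↔ _
  rw [Set.mem_compl_iff, mem_extV_defP ρ hdef, Set.not_nonempty_iff_eq_empty]
  exact Set.compl_empty_iff.trans (extV_iff_eq_univ ρ α β)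

lemma mem_extV_toPat (hK : K.toModel.Standard) {s} (φ : AForm Sg L s) (w : K.M s) :
    w ∈ extV K ρ φ.toPat ↔ SatA K.toModel ρ φ w := by
  induction φ generalizing ρ with
  | prop p => rw [AForm.toPat, extV_cProp]; rfl
  | nom j => rw [AForm.toPat, extV_cNom]; rfl
  | svar x => rfl
  | neg φ ih => exact not_congr (ih ρ w)
  | or φ ψ ihφ ihψ => exact or_congr (ihφ ρ w) (ihψ ρ w)
  | app σ φs ih =>
    exact ⟨fun ⟨ws, hws, hR⟩ => ⟨ws, hR, fun i => (ih i ρ _).1 (hws i)⟩,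
      fun ⟨ws, hR, hws⟩ => ⟨ws, fun i => (ih i ρ _).2 (hws i), hR⟩⟩
  | all x φ ih =>
    exact not_exists.trans <| forall_congr' fun ρ' =>
      not_and.trans <| imp_congr_right fun _ => not_not.trans (ih ρ' w)
  | at_ z φ ih =>
    have hextV := extV_and ρ (symPat z) φ.toPat
    rw [extV_symPat ρ hK] at hextV
    rw [AForm.toPat, mem_extV_defP ρ hdef, hextV]
    exact Set.singleton_inter_nonempty.trans (ih ρ _)

end Translation

lemma MLModel.toModel_standard {K : MLModel (SigC Sg L)} (hdef : DefOK K)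
    (hΓ : SatGammaC K) : K.toModel.Standard := by
  intro t j
  obtain ⟨x⟩ := L.neS t
  let ρ : Valu (Sg := SigC Sg L) L.SVAR K := fun u _ => (K.ne u).some
  obtain ⟨ρ', -, hρ'⟩ := hΓ t _ ⟨t, j, x, rfl⟩ ρ ▸ Set.mem_univ (ρ t x)
  rw [mem_extV_eqP ρ' hdef, extV_cNom] at hρ'
  exact ⟨ρ' t x, hρ'.symm⟩

lemma Model.satGammaC_toMLModel {M : Model Sg L} (hM : M.Standard) :
    SatGammaC M.toMLModel := by
  rintro s2 _ ⟨t, i, x, rfl⟩ ρ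
  obtain ⟨v, hv⟩ := hM t i
  refine Set.eq_univ_of_forall fun _ => ⟨_, variantV_update ρ x v, ?_⟩
  refine (mem_extV_eqP _ M.defOK_toMLModel _ _ _).2 ?_
  have hc : extV M.toMLModel (ρ.update x v) (cNom i) = {v} := (extV_cNom _ i).trans hv
  exact (congrArg singleton (ρ.update_apply_self x v)).trans hc.symm

theorem hybrid_valid_iff_ml_consequence {Sg : Sig} {L : Lang Sg} {s : Sg.S}
    (φ : AForm Sg L s) :
    (∀ (M : Model Sg L), M.Standard →
      ∀ (g : Assign M) (w : M.W s), SatA M g φ w) ↔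
    (∀ K : MLModel (SigC Sg L), DefOK K → SatGammaC K →
      ∀ ρ : Valu (Sg := SigC Sg L) L.SVAR K, extV K ρ φ.toPat = Set.univ) := by
  constructor
  · intro hvalid K hdef hΓ ρ
    have hK := K.toModel_standard hdef hΓ
    exact Set.eq_univ_of_forall fun w => (mem_extV_toPat ρ hdef hK φ w).2 (hvalid _ hK ρ w)
  · intro hml M hM g w
    have hφ := hml M.toMLModel M.defOK_toMLModel (Model.satGammaC_toMLModel hM) g
    exact (mem_extV_toPat (K := M.toMLModel) g M.defOK_toMLModel hM φ w).1 (hφ ▸ Set.mem_univ w)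

end HybridML
end
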